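/- For every natural number m ≥ 1 and every complex number c, i^m · (c/(2i)) · ∑_{l=0}^{m} P_{m-1}(1 + c/(2i) − l) / ((m−l)! · l!) = (2/m) · ∑_{l=0}^{⌊(m-1)/2⌋} (c/2)^{m-2l} · (−1)^l · t_l(m−2l−1), where P_{m-1}(y) = y(y+1)⋯(y+m−2) is the ascending Pochhammer polynomial of degree m−1 (with P_0 ≡ 1) evaluated in ℂ, and t_l(m−2l−1) is regarded as a complex number. -/

import Mathlib

/-!
Put `x = c/(2i)` and `m = j + 1`. Multiplying by `(j+1)!` turns the left-hand sum into
`T_j(x) = ∑_l C(j+1, l) P_j(1 + x - l)`, and the right-hand side is governed by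
`B_j(x) = ∑_l t_l(j - 2l) x^(j - 2l)`. Both `T_j` and `2 j! B_j` satisfy
`F_{j+2} = 2x F_{j+1} + (j+2)(j+1) F_j` with the same initial values: for `B_j` this is the
recursion defining `t`, read off coefficientwise; for `T_j` it is proved by creative telescoping.
Finally `(c/2)^(m-2l) (-1)^l = i^m x^(m-2l)`.
-/

/-- The coefficients `t_k(n)`: `t_k(0) = 1` and
`t_k(n) = ∑_{m=0}^{k} t_m(n-1)/(m + n/2)` for `n ≥ 1`. -/
noncomputable def t : ℕ → ℕ → ℝ
  | _, 0 => 1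
  | k, n + 1 => ∑ m ∈ Finset.range (k + 1), t m n / ((m : ℝ) + ((n : ℝ) + 1) / 2)

open Finset Polynomial

theorem Nat.cast_choose_mul_succ {R : Type*} [CommRing R] (n l : ℕ) :
    (n.choose l : R) * (n + 1) = ((n + 1).choose l : R) * (n + 1 - l) := by
  rcases le_or_gt l (n + 1) with hl | hl
  · have h := congrArg (Nat.cast : ℕ → R) (Nat.choose_mul_succ_eq n l)
    push_cast [Nat.cast_sub hl] at h
    exact h
  · simp [Nat.choose_eq_zero_of_lt hl, Nat.choose_eq_zero_of_lt (show n < l by omega)]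

theorem Nat.cast_choose_succ_right_mul {R : Type*} [CommRing R] (n l : ℕ) :
    (n.choose (l + 1) : R) * (l + 1) = (n.choose l : R) * (n - l) := by
  rcases le_or_gt l n with hl | hl
  · have h := congrArg (Nat.cast : ℕ → R) (Nat.choose_succ_right_eq n l)
    push_cast [Nat.cast_sub hl] at h
    exact h
  · simp [Nat.choose_eq_zero_of_lt hl, Nat.choose_eq_zero_of_lt (show n < l + 1 by omega)]

/-- `(j+1)!` times the left-hand sum of the theorem for `m = j + 1`. -/
noncomputable def pochhammerChooseSum (j : ℕ) (x : ℂ) : ℂ :=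
  ∑ l ∈ range (j + 2), ((j + 1).choose l : ℂ) * (ascPochhammer ℂ j).eval (1 + x - l)

/-- A creative-telescoping (Zeilberger) certificate for `pochhammerChooseSum_add_two`. -/
theorem choose_mul_ascPochhammer_eval_telescope (k l : ℕ) (x : ℂ) :
    ((k + 3).choose l : ℂ) * (ascPochhammer ℂ (k + 2)).eval (1 + x - l)
      - 2 * x * ((k + 2).choose l : ℂ) * (ascPochhammer ℂ (k + 1)).eval (1 + x - l)
      - (k + 2) * (k + 1) * ((k + 1).choose l : ℂ) * (ascPochhammer ℂ k).eval (1 + x - l)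
    = (1 - x) * (l + 1 : ℕ) * ((k + 3).choose (l + 1) : ℂ)
          * (ascPochhammer ℂ (k + 1)).eval (1 + x - (l + 1 : ℕ)) / (k + 3)
      - (1 - x) * l * ((k + 3).choose l : ℂ)
          * (ascPochhammer ℂ (k + 1)).eval (1 + x - l) / (k + 3) := by
  have hk3 : (k : ℂ) + 3 ≠ 0 := by norm_cast
  have hk2 : (k : ℂ) + 2 ≠ 0 := by norm_cast
  have hl1 : (l : ℂ) + 1 ≠ 0 := by norm_cast
  have hC₂ : ((k + 2).choose l : ℂ) = (k + 3).choose l * (k + 3 - l) / (k + 3) := by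
    rw [eq_div_iff hk3]
    have h := Nat.cast_choose_mul_succ (R := ℂ) (k + 2) l
    push_cast at h
    linear_combination h
  have hC₁ : ((k + 1).choose l : ℂ) = (k + 2).choose l * (k + 2 - l) / (k + 2) := by
    rw [eq_div_iff hk2]
    have h := Nat.cast_choose_mul_succ (R := ℂ) (k + 1) l
    push_cast at h
    linear_combination h
  have hC₃ : ((k + 3).choose (l + 1) : ℂ) = (k + 3).choose l * (k + 3 - l) / (l + 1) := by
    rw [eq_div_iff hl1, Nat.cast_choose_succ_right_mul]; push_cast; ring
  have hP₂ : (ascPochhammer ℂ (k + 2)).eval (1 + x - l) =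
      (ascPochhammer ℂ k).eval (1 + x - l) * (1 + x - l + k) * (1 + x - l + (k + 1)) := by
    rw [ascPochhammer_succ_eval, ascPochhammer_succ_eval]; push_cast; ring
  have hP₁ : (ascPochhammer ℂ (k + 1)).eval (1 + x - l) =
      (ascPochhammer ℂ k).eval (1 + x - l) * (1 + x - l + k) := ascPochhammer_succ_eval _ _
  have hP₁' : (ascPochhammer ℂ (k + 1)).eval (1 + x - (l + 1 : ℕ)) =
      (x - l) * (ascPochhammer ℂ k).eval (1 + x - l) := by
    rw [ascPochhammer_succ_left]
    simp only [eval_mul, eval_X, eval_comp, eval_add, eval_one]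
    push_cast; ring_nf
  rw [hP₂, hP₁, hP₁', hC₃, hC₁, hC₂]
  push_cast
  field_simp
  ring

theorem pochhammerChooseSum_eq_sum_range {j N : ℕ} (hN : j + 2 ≤ N) (x : ℂ) :
    pochhammerChooseSum j x =
      ∑ l ∈ range N, ((j + 1).choose l : ℂ) * (ascPochhammer ℂ j).eval (1 + x - l) := by
  refine sum_subset (range_subset_range.mpr hN) fun l _ hl => ?_
  rw [Nat.choose_eq_zero_of_lt (by simp only [mem_range, not_lt] at hl; omega), Nat.cast_zero,
    zero_mul]

theorem pochhammerChooseSum_add_two (k : ℕ) (x : ℂ) :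
    pochhammerChooseSum (k + 2) x =
      2 * x * pochhammerChooseSum (k + 1) x + (k + 2) * (k + 1) * pochhammerChooseSum k x := by
  rw [pochhammerChooseSum_eq_sum_range (N := k + 4) le_rfl,
    pochhammerChooseSum_eq_sum_range (N := k + 4) (by omega),
    pochhammerChooseSum_eq_sum_range (N := k + 4) (by omega), ← sub_eq_zero, mul_sum, mul_sum,
    ← sum_add_distrib, ← sum_sub_distrib]
  have hsum := sum_range_sub (fun l : ℕ => (1 - x) * l * ((k + 3).choose l : ℂ)
    * (ascPochhammer ℂ (k + 1)).eval (1 + x - l) / (k + 3)) (k + 4)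
  simp only [Nat.choose_succ_self, Nat.cast_zero, mul_zero, zero_mul, zero_div, sub_zero] at hsum
  rw [← hsum]
  refine sum_congr rfl fun l _ => ?_
  rw [← choose_mul_ascPochhammer_eval_telescope]
  ring

theorem t_zero_succ (n : ℕ) : t 0 (n + 1) = t 0 n / (((n : ℝ) + 1) / 2) := by
  simp [t]

theorem t_succ_succ (k n : ℕ) :
    t (k + 1) (n + 1) = t k (n + 1) + t (k + 1) n / ((k + 1 : ℝ) + ((n : ℝ) + 1) / 2) := by
  rw [t, t, sum_range_succ]
  push_cast
  ring

/-- The coefficient of `x ^ k` in `∑ l, t_l(j - 2l) x^(j - 2l)`. -/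
noncomputable def tCoeff (j k : ℕ) : ℝ :=
  if k ≤ j ∧ Even (j - k) then t ((j - k) / 2) k else 0

theorem tCoeff_of_eq {j k L : ℕ} (h : j = k + 2 * L) : tCoeff j k = t L k := by
  rw [tCoeff, if_pos ⟨by omega, by rw [Nat.even_iff]; omega⟩]
  congr 1
  omega

theorem tCoeff_of_forall_ne {j k : ℕ} (h : ∀ L, j ≠ k + 2 * L) : tCoeff j k = 0 := by
  rw [tCoeff, if_neg]
  rintro ⟨hkj, heven⟩
  rw [Nat.even_iff] at heven
  exact h ((j - k) / 2) (by omega)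

theorem tCoeff_add_two_zero (j : ℕ) : tCoeff (j + 2) 0 = tCoeff j 0 := by
  by_cases h : ∃ L, j = 2 * L
  · obtain ⟨L, rfl⟩ := h
    rw [tCoeff_of_eq (L := L + 1) (by omega), tCoeff_of_eq (L := L) (by omega), t, t]
  · push Not at h
    rw [tCoeff_of_forall_ne (fun L => by have := h (L - 1); omega),
      tCoeff_of_forall_ne (fun L => by simpa using h L)]

theorem tCoeff_add_two_succ (j k : ℕ) :
    tCoeff (j + 2) (k + 1) = 2 / ((j : ℝ) + 2) * tCoeff (j + 1) k + tCoeff j (k + 1) := by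
  have hj : (j : ℝ) + 2 ≠ 0 := by positivity
  by_cases h : ∃ L, j + 1 = k + 2 * L
  · obtain ⟨L, hL⟩ := h
    rcases L with _ | L
    · rw [tCoeff_of_eq (L := 0) (by omega), tCoeff_of_eq (L := 0) (by omega),
        tCoeff_of_forall_ne (fun L => by omega), t_zero_succ,
        show (k : ℝ) = j + 1 by norm_cast; omega]
      field_simp
      ring
    · rw [tCoeff_of_eq (L := L + 1) (by omega), tCoeff_of_eq (L := L + 1) (by omega),
        tCoeff_of_eq (L := L) (by omega), t_succ_succ,
        show (L : ℝ) + 1 + ((k : ℝ) + 1) / 2 = ((j : ℝ) + 2) / 2 by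
          have : (j : ℝ) + 1 = k + 2 * (L + 1) := by exact_mod_cast hL
          linarith]
      field_simp
      ring
  · push Not at h
    rw [tCoeff_of_forall_ne (fun L => by have := h L; omega),
      tCoeff_of_forall_ne (fun L => by simpa using h L),
      tCoeff_of_forall_ne (fun L => by have := h (L + 1); omega)]
    simp

noncomputable def tPoly (j : ℕ) (x : ℂ) : ℂ :=
  ∑ k ∈ range (j + 1), (tCoeff j k : ℂ) * x ^ k

theorem tPoly_eq_sum_range {j N : ℕ} (hN : j + 1 ≤ N) (x : ℂ) :
    tPoly j x = ∑ k ∈ range N, (tCoeff j k : ℂ) * x ^ k := by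
  refine sum_subset (range_subset_range.mpr hN) fun k _ hk => ?_
  rw [tCoeff_of_forall_ne (fun L => by simp only [mem_range, not_lt] at hk; omega),
    Complex.ofReal_zero, zero_mul]

theorem tPoly_add_two (j : ℕ) (x : ℂ) :
    tPoly (j + 2) x = 2 * x / (j + 2) * tPoly (j + 1) x + tPoly j x := by
  have shift : ∀ i N, i + 1 ≤ N + 1 → tPoly i x =
      ∑ k ∈ range N, (tCoeff i (k + 1) : ℂ) * x ^ (k + 1) + tCoeff i 0 := by
    intro i N hN
    rw [tPoly_eq_sum_range hN, sum_range_succ', pow_zero, mul_one]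
  rw [shift (j + 2) (j + 2) le_rfl, shift j (j + 2) (by omega), tPoly, mul_sum, ← add_assoc,
    ← sum_add_distrib]
  simp only [tCoeff_add_two_succ, tCoeff_add_two_zero]
  push_cast
  congr 1
  refine sum_congr rfl fun k _ => ?_
  ring

theorem tPoly_eq_sum (j : ℕ) (x : ℂ) :
    tPoly j x = ∑ l ∈ range (j / 2 + 1), x ^ (j - 2 * l) * (t l (j - 2 * l) : ℂ) := by
  refine (sum_of_injOn (fun l => j - 2 * l) ?_ ?_ ?_ ?_).symm
  · intro l hl l' hl' h
    simp only [coe_range, Set.mem_Iio] at hl hl' h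
    omega
  · intro l hl
    simp only [coe_range, Set.mem_Iio] at hl ⊢
    omega
  · intro k _ hk
    rw [tCoeff_of_forall_ne, Complex.ofReal_zero, zero_mul]
    intro L hL
    exact hk ⟨L, by simp only [coe_range, Set.mem_Iio]; omega, by simp only; omega⟩
  · intro l hl
    simp only [mem_range] at hl
    rw [tCoeff_of_eq (L := l) (by omega), mul_comm]

theorem pochhammerChooseSum_eq_tPoly (j : ℕ) (x : ℂ) :
    pochhammerChooseSum j x = 2 * j.factorial * tPoly j x := by
  induction j using Nat.twoStepInduction with
  | zero =>
    norm_num [pochhammerChooseSum, tPoly, tCoeff_of_eq (j := 0) (k := 0) (L := 0) rfl, t,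
      sum_range_succ]
  | one =>
    simp only [pochhammerChooseSum, Nat.reduceAdd, ascPochhammer_one, eval_X, sum_range_succ,
      range_one, sum_singleton, Nat.choose_zero_right, Nat.cast_one, CharP.cast_eq_zero, sub_zero,
      one_mul, Nat.choose_succ_self_right, Nat.cast_ofNat, add_sub_cancel_left, Nat.choose_self,
      Nat.factorial_one, mul_one, tPoly, tCoeff_of_forall_ne (j := 1) (k := 0) (by omega),
      Complex.ofReal_zero, pow_zero, tCoeff_of_eq (j := 1) (k := 1) (L := 0) rfl, t, zero_add,
      one_div, inv_inv, Complex.ofReal_ofNat, pow_one]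
    ring
  | more k ih₀ ih₁ =>
    have hk : (k : ℂ) + 2 ≠ 0 := by norm_cast
    rw [pochhammerChooseSum_add_two, ih₀, ih₁, tPoly_add_two, Nat.factorial_succ (k + 1),
      Nat.factorial_succ k]
    push_cast
    field_simp
    ring

theorem sum_range_div_factorial_mul_factorial {K : Type*} [Field K] [CharZero K] (n : ℕ)
    (f : ℕ → K) :
    ∑ l ∈ range (n + 1), f l / (((n - l).factorial : K) * (l.factorial : K)) =
      (∑ l ∈ range (n + 1), (n.choose l : K) * f l) / n.factorial := by
  rw [sum_div]
  refine sum_congr rfl fun l hl => ?_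
  have := Nat.cast_ne_zero (R := K) |>.mpr n.factorial_ne_zero
  rw [Nat.cast_choose K (by have := mem_range.mp hl; omega)]
  field_simp

theorem Complex.I_mul_pow_sub_mul_neg_one_pow {n l : ℕ} (h : 2 * l ≤ n) (x : ℂ) :
    (Complex.I * x) ^ (n - 2 * l) * (-1) ^ l = Complex.I ^ n * x ^ (n - 2 * l) := by
  rw [← Complex.I_sq, ← pow_mul, mul_pow, mul_right_comm, ← pow_add, Nat.sub_add_cancel h]

/-- Equation (25) of the paper (the Lemma): for `m ≥ 1` and `c ∈ ℂ`,
`i^m · (c/(2i)) · ∑_{l=0}^{m} P_{m-1}(1 + c/(2i) − l) / ((m−l)!·l!)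
  = (2/m) · ∑_{l=0}^{⌊(m-1)/2⌋} (c/2)^{m-2l} · (−1)^l · t_l(m−2l−1)`,
where `P_{m-1}(y) = y(y+1)⋯(y+m−2)` is the ascending Pochhammer polynomial of
degree `m−1`. -/
theorem arctan_power_lemma (m : ℕ) (hm : 1 ≤ m) (c : ℂ) :
    Complex.I ^ m * (c / (2 * Complex.I)) *
        ∑ l ∈ Finset.range (m + 1),
          Polynomial.eval (1 + c / (2 * Complex.I) - (l : ℂ)) (ascPochhammer ℂ (m - 1)) /
            ((Nat.factorial (m - l) : ℂ) * (Nat.factorial l : ℂ)) =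
      (2 / (m : ℂ)) *
        ∑ l ∈ Finset.range ((m - 1) / 2 + 1),
          (c / 2) ^ (m - 2 * l) * (-1 : ℂ) ^ l * (t l (m - 2 * l - 1) : ℂ) := by
  obtain ⟨j, rfl⟩ : ∃ j, m = j + 1 := ⟨m - 1, by omega⟩
  set x := c / (2 * Complex.I) with hx
  have hc : c / 2 = Complex.I * x := by
    rw [hx]
    field_simp
  have hsum : ∑ l ∈ range (j + 1 + 1), (ascPochhammer ℂ (j + 1 - 1)).eval (1 + x - l) /
      (((j + 1 - l).factorial : ℂ) * (l.factorial : ℂ)) = 2 / (j + 1 : ℕ) * tPoly j x := by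
    rw [sum_range_div_factorial_mul_factorial, Nat.add_sub_cancel, ← pochhammerChooseSum.eq_1,
      pochhammerChooseSum_eq_tPoly, Nat.factorial_succ]
    have := Nat.cast_ne_zero (R := ℂ) |>.mpr j.factorial_ne_zero
    push_cast
    field_simp
  rw [hsum, tPoly_eq_sum, Nat.add_sub_cancel]
  simp only [mul_sum]
  refine sum_congr rfl fun l hl_mem => ?_
  have hl : 2 * l ≤ j := by have := mem_range.mp hl_mem; omega
  rw [hc, Complex.I_mul_pow_sub_mul_neg_one_pow (by omega), Nat.sub_right_comm, Nat.add_sub_cancel,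
    Nat.sub_add_comm hl, pow_succ]
  ring
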